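/- arXiv:math/0304429 — 5 statements merged into one kernel-verified Lean document; each statement's English description precedes it below -/
import Mathlib

section
/- Let π ∈ T_{n-1} and π̄ ∈ T_n be obtained by inserting n between positions k and k+1 (ldes(π) ≤ k ≤ n-1). Then Des(π̄⁻¹) = Des(π⁻¹) if π⁻¹(n-1) ≤ k, and Des(π̄⁻¹) = Des(π⁻¹) ∪ {n-1} if k < π⁻¹(n-1). -/
open Finset

/-- A permutation is 321-avoiding if it has no decreasing subsequence of length 3. -/
def Avoids321 {n : ℕ} (π : Equiv.Perm (Fin n)) : Prop :=
  ¬ ∃ i j k : Fin n, i < j ∧ j < k ∧ π k < π j ∧ π j < π i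

instance {n : ℕ} : DecidablePred (Avoids321 (n := n)) := fun π =>
  decidable_of_iff (¬ ∃ i j k : Fin n, i < j ∧ j < k ∧ π k < π j ∧ π j < π i) Iff.rfl

/-- The set `T_n` of 321-avoiding permutations of order `n`. -/
def Tset (n : ℕ) : Finset (Equiv.Perm (Fin n)) :=
  Finset.univ.filter (fun π => Avoids321 π)

/-- The value `π(i)` in one-based notation: positions `1,…,n`, values `1,…,n`. -/
def pval {n : ℕ} (π : Equiv.Perm (Fin n)) (i : ℕ) : ℕ :=
  if h : i - 1 < n then (π ⟨i - 1, h⟩ : ℕ) + 1 else 0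

/-- The descent set `Des(π) = {1 ≤ i ≤ n-1 : π(i) > π(i+1)}` (one-based). -/
def desSet {n : ℕ} (π : Equiv.Perm (Fin n)) : Finset ℕ :=
  (Finset.Icc 1 (n - 1)).filter (fun i => pval π (i + 1) < pval π i)

/-- The last descent of `π` (0 for the identity). -/
def ldes {n : ℕ} (π : Equiv.Perm (Fin n)) : ℕ := (desSet π).sup id

/-- `lind(π) = π⁻¹(n)`, the (one-based) position of the letter `n` in `π`. -/
def lind {n : ℕ} (π : Equiv.Perm (Fin n)) : ℕ := pval π.symm n

/-- The inversion number of `π`. -/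
def invNum {n : ℕ} (π : Equiv.Perm (Fin n)) : ℕ :=
  (Finset.univ.filter (fun q : Fin n × Fin n => q.1 < q.2 ∧ π q.2 < π q.1)).card

/-- A ±1 sequence of length `2n` (`true` = +1) is a Dyck path if it has `n` up
steps and every prefix has at least as many up steps as down steps. -/
def IsDyckPred (n : ℕ) (p : Fin (2 * n) → Bool) : Prop :=
  (Finset.univ.filter (fun i => p i = true)).card = n ∧
  ∀ k ≤ 2 * n,
    k ≤ 2 * (Finset.univ.filter (fun i : Fin (2 * n) => (i : ℕ) < k ∧ p i = true)).card

instance (n : ℕ) : DecidablePred (IsDyckPred n) := fun p => by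
  unfold IsDyckPred; infer_instance

/-- The set `P_n` of Dyck paths of length `2n`. -/
def DyckPath (n : ℕ) : Type := { p : Fin (2 * n) → Bool // IsDyckPred n p }

instance (n : ℕ) : Fintype (DyckPath n) := by unfold DyckPath; infer_instance

/-- The `i`-th step of the path, one-based; `true` = +1, `false` = -1. -/
def pstep {n : ℕ} (p : DyckPath n) (i : ℕ) : Bool :=
  if h : i - 1 < 2 * n then p.1 ⟨i - 1, h⟩ else false

/-- `Des(p) = {1 ≤ i ≤ n-1 : p_i = +1, p_{i+1} = -1}`. -/
def pathDes {n : ℕ} (p : DyckPath n) : Finset ℕ :=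
  (Finset.Icc 1 (n - 1)).filter (fun i => pstep p i = true ∧ pstep p (i + 1) = false)

/-- `Des(p⁻¹) = {1 ≤ i ≤ n-1 : p_{2n-i} = +1, p_{2n-i+1} = -1}`. -/
def pathDesInv {n : ℕ} (p : DyckPath n) : Finset ℕ :=
  (Finset.Icc 1 (n - 1)).filter
    (fun i => pstep p (2 * n - i) = true ∧ pstep p (2 * n - i + 1) = false)

/-- `ldes(p) = max{1 ≤ i ≤ n-1 : p_i = +1, p_{i+1} = -1}` (0 if none). -/
def pathLdes {n : ℕ} (p : DyckPath n) : ℕ := (pathDes p).sup id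

/-- `lind(p) = max{1 ≤ i ≤ n : p_i = +1, p_{i+1} = -1}` (0 if none). -/
def pathLind {n : ℕ} (p : DyckPath n) : ℕ :=
  ((Finset.Icc 1 n).filter (fun i => pstep p i = true ∧ pstep p (i + 1) = false)).sup id

/-- `tail(p) = 2n - max{i : p_i = +1, p_{i+1} = -1}`, the number of consecutive
down steps at the end of `p`. -/
def pathTail {n : ℕ} (p : DyckPath n) : ℕ :=
  2 * n -
    ((Finset.Icc 1 (2 * n - 1)).filter
      (fun i => pstep p i = true ∧ pstep p (i + 1) = false)).sup id

/-! On the values `1, …, n-1` the inverse `π̄⁻¹` is `π⁻¹` followed by the increasing map that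
skips `k + 1`, so it has the same descents there as `π⁻¹`; the only new candidate is `n - 1`,
a descent of `π̄⁻¹` exactly when `π̄⁻¹(n-1) > π̄⁻¹(n) = k + 1`, i.e. when `π⁻¹(n-1) > k`. -/

section pval

variable {n : ℕ} (σ : Equiv.Perm (Fin n))

lemma one_le_pval {p : ℕ} (hp1 : 1 ≤ p) (hpn : p ≤ n) : 1 ≤ pval σ p := by
  simp only [pval, dif_pos (show p - 1 < n by omega)]
  omega

lemma pval_le {p : ℕ} (hp1 : 1 ≤ p) (hpn : p ≤ n) : pval σ p ≤ n := by
  have h : p - 1 < n := by omega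
  have := (σ ⟨p - 1, h⟩).is_lt
  simp only [pval, dif_pos h]
  omega

lemma pval_inv_of_pval_eq {p v : ℕ} (hp1 : 1 ≤ p) (hpn : p ≤ n) (h : pval σ p = v) :
    pval σ⁻¹ v = p := by
  have hp : p - 1 < n := by omega
  have hv : v - 1 < n := by have := pval_le σ hp1 hpn; omega
  simp only [pval, dif_pos hp] at h
  have hσ : σ⁻¹ ⟨v - 1, hv⟩ = ⟨p - 1, hp⟩ := by
    rw [Equiv.Perm.inv_eq_iff_eq]
    exact Fin.ext (by simp; omega)
  simp only [pval, dif_pos hv, hσ]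
  omega

lemma pval_pval_inv {v : ℕ} (hv1 : 1 ≤ v) (hvn : v ≤ n) : pval σ (pval σ⁻¹ v) = v := by
  simpa using pval_inv_of_pval_eq σ⁻¹ hv1 hvn rfl

end pval

def skipSucc (k p : ℕ) : ℕ := if p ≤ k then p else p + 1

lemma skipSucc_of_le {k p : ℕ} (h : p ≤ k) : skipSucc k p = p := if_pos h

lemma skipSucc_of_lt {k p : ℕ} (h : k < p) : skipSucc k p = p + 1 := if_neg (by omega)

lemma skipSucc_strictMono (k : ℕ) : StrictMono (skipSucc k) := by
  intro a b hab
  unfold skipSucc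
  split_ifs <;> omega

lemma desSet_eq_of_pval_strictMono {n : ℕ} {σ : Equiv.Perm (Fin n)}
    {τ : Equiv.Perm (Fin (n + 1))} {f : ℕ → ℕ} (hf : StrictMono f)
    (h : ∀ v, 1 ≤ v → v ≤ n → pval τ v = f (pval σ v)) :
    desSet τ = if pval τ (n + 1) < pval τ n then desSet σ ∪ {n} else desSet σ := by
  ext i
  rcases eq_or_ne i n with rfl | hi
  · have hσ : i ∉ desSet σ := by simp only [desSet, mem_filter, mem_Icc]; omega
    -- `pval τ 0 = pval τ 1`, since `0 - 1 = 0` in `ℕ`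
    have hi1 : pval τ (i + 1) < pval τ i → 1 ≤ i := by
      rintro hdes
      by_contra! h0
      simp [Nat.lt_one_iff.mp h0, pval] at hdes
    split_ifs with hdes
    · simp [desSet, hdes, hi1 hdes]
    · exact iff_of_false (by simp [desSet, hdes]) hσ
  · have hmem : i ∈ desSet τ ↔ i ∈ desSet σ := by
      simp only [desSet, mem_filter, mem_Icc, Nat.add_sub_cancel]
      refine ⟨fun ⟨⟨hi1, hin⟩, hdes⟩ => ⟨⟨hi1, by omega⟩, ?_⟩,
        fun ⟨⟨hi1, hin⟩, hdes⟩ => ⟨⟨hi1, by omega⟩, ?_⟩⟩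
      · rwa [h i hi1 (by omega), h (i + 1) (by omega) (by omega), hf.lt_iff_lt] at hdes
      · rwa [h i hi1 (by omega), h (i + 1) (by omega) (by omega), hf.lt_iff_lt]
    split_ifs <;> simp [hi, hmem]

lemma pval_inv_eq_skipSucc {m k : ℕ} {π : Equiv.Perm (Fin m)} {πb : Equiv.Perm (Fin (m + 1))}
    (h1 : ∀ i, 1 ≤ i → i ≤ k → pval πb i = pval π i)
    (h3 : ∀ i, k + 2 ≤ i → i ≤ m + 1 → pval πb i = pval π (i - 1))
    {v : ℕ} (hv1 : 1 ≤ v) (hvm : v ≤ m) : pval πb⁻¹ v = skipSucc k (pval π⁻¹ v) := by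
  have hp1 := one_le_pval π⁻¹ hv1 hvm
  have hpm := pval_le π⁻¹ hv1 hvm
  have hpv := pval_pval_inv π hv1 hvm
  rcases le_or_gt (pval π⁻¹ v) k with hpk | hpk
  · rw [skipSucc_of_le hpk]
    exact pval_inv_of_pval_eq πb hp1 (by omega) (by rw [h1 _ hp1 hpk, hpv])
  · rw [skipSucc_of_lt hpk]
    refine pval_inv_of_pval_eq πb (by omega) (by omega) ?_
    rw [h3 _ (by omega) (by omega), Nat.add_sub_cancel, hpv]

theorem insert_desSet_inv_general (m k : ℕ) (hm : 1 ≤ m) (hk : k ≤ m)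
    (π : Equiv.Perm (Fin m))
    (πb : Equiv.Perm (Fin (m + 1)))
    (h1 : ∀ i, 1 ≤ i → i ≤ k → pval πb i = pval π i)
    (h2 : pval πb (k + 1) = m + 1)
    (h3 : ∀ i, k + 2 ≤ i → i ≤ m + 1 → pval πb i = pval π (i - 1)) :
    (lind π ≤ k → desSet πb⁻¹ = desSet π⁻¹) ∧
      (k < lind π → desSet πb⁻¹ = desSet π⁻¹ ∪ {m}) := by
  have htop : pval πb⁻¹ (m + 1) = k + 1 := pval_inv_of_pval_eq πb (by omega) (by omega) h2
  rw [desSet_eq_of_pval_strictMono (skipSucc_strictMono k)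
      (fun _ hv1 hvm => pval_inv_eq_skipSucc h1 h3 hv1 hvm),
    htop, pval_inv_eq_skipSucc h1 h3 hm le_rfl, ← show lind π = pval π⁻¹ m from rfl]
  constructor
  · intro hlind
    rw [skipSucc_of_le hlind, if_neg (by omega)]
  · intro hlind
    rw [skipSucc_of_lt hlind, if_pos (by omega)]

theorem insert_desSet_inv (m k : ℕ) (hm : 1 ≤ m) (hk : k ≤ m)
    (π : Equiv.Perm (Fin m)) (hπ : Avoids321 π) (hld : ldes π ≤ k)
    (πb : Equiv.Perm (Fin (m + 1)))
    (h1 : ∀ i, 1 ≤ i → i ≤ k → pval πb i = pval π i)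
    (h2 : pval πb (k + 1) = m + 1)
    (h3 : ∀ i, k + 2 ≤ i → i ≤ m + 1 → pval πb i = pval π (i - 1)) :
    (lind π ≤ k → desSet πb⁻¹ = desSet π⁻¹) ∧
      (k < lind π → desSet πb⁻¹ = desSet π⁻¹ ∪ {m}) :=
  insert_desSet_inv_general m k hm hk π πb h1 h2 h3
end

section
/- For every 321-avoiding permutation π ∈ T_{n-1} (n ≥ 2), exactly one of the following holds: either ldes(π) = π⁻¹(n-1) < n-1 (when n-1 is not the last digit of π), or ldes(π) < π⁻¹(n-1) = n-1 (when n-1 is the last digit of π). -/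
open Finset

/-! The largest letter sits at position `lind π`. If it is not the last letter, the letter after it
is smaller, so `lind π` is a descent; a descent further right would form a `321` pattern with the
largest letter, so it is the last one. If the largest letter comes last, `lind π` is the length of
`π` and exceeds every descent. -/

lemma pval_add_one {m : ℕ} (π : Equiv.Perm (Fin m)) {k : ℕ} (hk : k < m) :
    pval π (k + 1) = π ⟨k, hk⟩ + 1 := by
  simp [pval, hk]

section
variable {n : ℕ} {π : Equiv.Perm (Fin (n + 1))}

lemma lind_eq_symm_last_add_one (π : Equiv.Perm (Fin (n + 1))) :
    lind π = π.symm (Fin.last n) + 1 :=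
  pval_add_one π.symm n.lt_succ_self

lemma mem_desSet_iff {d : ℕ} :
    d ∈ desSet π ↔ ∃ i : Fin n, π i.succ < π i.castSucc ∧ (i : ℕ) + 1 = d := by
  simp only [desSet, mem_filter, mem_Icc, Nat.add_sub_cancel]
  constructor
  · rintro ⟨⟨hd1, hdn⟩, hdes⟩
    obtain ⟨k, rfl⟩ := Nat.exists_eq_add_of_le' hd1
    rw [pval_add_one π (by omega : k + 1 < n + 1), pval_add_one π (by omega : k < n + 1)] at hdes
    exact ⟨⟨k, by omega⟩, Fin.lt_def.2 (Nat.lt_of_add_lt_add_right hdes), rfl⟩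
  · rintro ⟨i, hdes, rfl⟩
    refine ⟨⟨by omega, i.isLt⟩, ?_⟩
    rw [pval_add_one π (by omega : (i : ℕ) + 1 < n + 1),
      pval_add_one π (by omega : (i : ℕ) < n + 1)]
    exact Nat.add_lt_add_right (Fin.lt_def.1 hdes) 1

lemma ldes_le_iff {b : ℕ} :
    ldes π ≤ b ↔ ∀ i : Fin n, π i.succ < π i.castSucc → (i : ℕ) + 1 ≤ b := by
  simp only [ldes, Finset.sup_le_iff, mem_desSet_iff, id]
  grind

lemma le_ldes {i : Fin n} (hi : π i.succ < π i.castSucc) : (i : ℕ) + 1 ≤ ldes π :=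
  Finset.le_sup (f := id) (mem_desSet_iff.2 ⟨i, hi, rfl⟩)

lemma ldes_le (π : Equiv.Perm (Fin (n + 1))) : ldes π ≤ n :=
  ldes_le_iff.2 fun i _ => i.isLt

lemma Avoids321.castSucc_le_of_descent (hπ : Avoids321 π) {j : Fin (n + 1)}
    (hj : π j = Fin.last n) {i : Fin n} (hi : π i.succ < π i.castSucc) : i.castSucc ≤ j := by
  by_contra! hji
  have hne : π i.castSucc ≠ Fin.last n := hj ▸ π.injective.ne hji.ne'
  exact hπ ⟨j, i.castSucc, i.succ, hji, Fin.castSucc_lt_succ, hi,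
    hj ▸ Fin.lt_last_iff_ne_last.2 hne⟩

lemma apply_succ_lt_of_apply_castSucc_eq_last {j : Fin n} (hj : π j.castSucc = Fin.last n) :
    π j.succ < π j.castSucc := by
  rw [hj, Fin.lt_last_iff_ne_last, ← hj]
  exact π.injective.ne ((Fin.castSucc_lt_succ (i := j)).ne')

lemma pval_last_eq_iff (π : Equiv.Perm (Fin (n + 1))) :
    pval π (n + 1) = n + 1 ↔ π (Fin.last n) = Fin.last n := by
  rw [pval_add_one π n.lt_succ_self, Nat.add_right_cancel_iff, Fin.ext_iff, Fin.val_last]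
  rfl

lemma Avoids321.ldes_eq_lind (hπ : Avoids321 π) {j : Fin n} (hj : π j.castSucc = Fin.last n) :
    ldes π = lind π := by
  rw [lind_eq_symm_last_add_one, π.symm_apply_eq.2 hj.symm, Fin.val_castSucc]
  refine le_antisymm (ldes_le_iff.2 fun i hi => ?_)
    (le_ldes (apply_succ_lt_of_apply_castSucc_eq_last hj))
  simpa using hπ.castSucc_le_of_descent hj hi

end

theorem ldes_lind_dichotomy (m : ℕ) (hm : 1 ≤ m)
    (π : Equiv.Perm (Fin m)) (hπ : Avoids321 π) :
    Xor' (ldes π = lind π ∧ lind π < m) (ldes π < lind π ∧ lind π = m) ∧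
      (pval π m = m ↔ lind π = m) := by
  obtain ⟨n, rfl⟩ := Nat.exists_eq_add_of_le' hm
  refine ⟨?_, by rw [pval_last_eq_iff, lind, pval_last_eq_iff, π.symm_apply_eq, eq_comm]⟩
  have hlind := lind_eq_symm_last_add_one π
  induction hj : π.symm (Fin.last n) using Fin.lastCases with
  | last =>
    rw [hj, Fin.val_last] at hlind
    have := ldes_le π
    exact Or.inr ⟨⟨by omega, hlind⟩, fun h => by omega⟩
  | cast j =>
    have hldes := hπ.ldes_eq_lind (π.symm_apply_eq.1 hj).symm
    rw [hj, Fin.val_castSucc] at hlind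
    exact Or.inl ⟨⟨hldes, by omega⟩, fun h => by omega⟩
end

section
/- For every 321-avoiding permutation π ∈ S_n with π(n) ≠ n, the position π⁻¹(n) of the largest letter is the last descent of π; that is, lind(π) = ldes(π). -/
open Finset

theorem lind_eq_ldes_of_ne_top (n : ℕ) (hn : 1 ≤ n)
    (π : Equiv.Perm (Fin n)) (hπ : Avoids321 π) (h : pval π n ≠ n) :
    lind π = ldes π := by
  have hn1 : n - 1 < n := by omega
  have pval_succ : ∀ (σ : Equiv.Perm (Fin n)) (k : ℕ) (hk : k < n),
      pval σ (k + 1) = (σ ⟨k, hk⟩ : ℕ) + 1 := by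
    intro σ k hk
    simp [pval, hk]
  set top : Fin n := ⟨n - 1, hn1⟩ with htop
  have htopv : (top : ℕ) = n - 1 := rfl
  set m : Fin n := π.symm top with hmdef
  have hπm : π m = top := π.apply_symm_apply top
  have hlind : lind π = (m : ℕ) + 1 := by
    have : lind π = pval π.symm ((n - 1) + 1) := by
      unfold lind; congr 1; omega
    rw [this, pval_succ π.symm (n - 1) hn1]
  have hmne : (m : ℕ) ≠ n - 1 := by
    intro hc
    apply h
    have hmt : m = top := Fin.ext hc
    have hπt : π top = top := hmt ▸ hπm
    have : pval π n = pval π ((n - 1) + 1) := by congr 1; omega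
    rw [this, pval_succ π (n - 1) hn1]
    rw [show (⟨n - 1, hn1⟩ : Fin n) = top from rfl, hπt, htopv]
    omega
  have hmlt : (m : ℕ) < n - 1 := by
    have := m.isLt; omega
  have hb1 : (m : ℕ) + 1 < n := by omega
  set b : Fin n := ⟨(m : ℕ) + 1, hb1⟩ with hbdef
  have hbne : π b ≠ top := by
    intro hc
    have := π.injective (hc.trans hπm.symm)
    have := congrArg Fin.val this
    simp [hbdef] at this
  have hblt : (π b : ℕ) < n - 1 := by
    have h3 := (π b).isLt
    have : (π b : ℕ) ≠ n - 1 := fun hc => hbne (Fin.ext hc)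
    omega
  have hmem : (m : ℕ) + 1 ∈ desSet π := by
    simp only [desSet, Finset.mem_filter, Finset.mem_Icc]
    refine ⟨⟨by omega, by omega⟩, ?_⟩
    rw [pval_succ π (m : ℕ) m.isLt, show (m : ℕ) + 1 + 1 = ((m : ℕ) + 1) + 1 from rfl,
      pval_succ π ((m : ℕ) + 1) hb1]
    rw [show (⟨(m : ℕ), m.isLt⟩ : Fin n) = m from rfl, hπm, htopv]
    rw [show (⟨(m : ℕ) + 1, hb1⟩ : Fin n) = b from rfl]
    omega
  have hub : ∀ i ∈ desSet π, i ≤ (m : ℕ) + 1 := by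
    intro i hi
    by_contra hgt
    push_neg at hgt
    simp only [desSet, Finset.mem_filter, Finset.mem_Icc] at hi
    obtain ⟨⟨hi1, hi2⟩, hdes⟩ := hi
    have ha : i - 1 < n := by omega
    have hbb : i < n := by omega
    have e1 : i = (i - 1) + 1 := by omega
    rw [e1, pval_succ π (i - 1) ha, show i - 1 + 1 + 1 = i + 1 from by omega,
      pval_succ π i hbb] at hdes
    set A : Fin n := ⟨i - 1, ha⟩
    set B : Fin n := ⟨i, hbb⟩
    have hBA : π B < π A := by
      rw [Fin.lt_def]; omega
    have hmA : m < A := by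
      rw [Fin.lt_def]; show (m : ℕ) < i - 1; omega
    have hAB : A < B := by
      rw [Fin.lt_def]; show i - 1 < i; omega
    have hAm : π A < π m := by
      rw [hπm, Fin.lt_def, htopv]
      have hne : π A ≠ top := by
        intro hc
        have := π.injective (hc.trans hπm.symm)
        rw [this] at hmA
        exact lt_irrefl _ hmA
      have h3 := (π A).isLt
      have : (π A : ℕ) ≠ n - 1 := fun hc => hne (Fin.ext hc)
      omega
    exact hπ ⟨m, A, B, hmA, hAB, hBA, hAm⟩
  have hldes : ldes π = (m : ℕ) + 1 :=
    le_antisymm (Finset.sup_le hub) (Finset.le_sup (f := id) hmem)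
  rw [hlind, hldes]
end

section
/- Let g_n(1,q) = Σ_{π ∈ T_n} q^{ldes(π)} with g_0(1,q) := 1. Then for all n ≥ 1, (1-q)·g_{n+1}(1,q) = g_n(1,q) - q^{n+1}·g_n(1,1). -/
open Finset

namespace LdesAux

open Equiv Finset

variable {n : ℕ}

/-- Insert the largest value at position `m` (zero-based). -/
def ins (σ : Equiv.Perm (Fin n)) (m : Fin (n + 1)) : Equiv.Perm (Fin (n + 1)) :=
  (finSuccEquiv' m).trans ((σ.optionCongr).trans (finSuccEquiv' (Fin.last n)).symm)

lemma ins_apply_self (σ : Equiv.Perm (Fin n)) (m : Fin (n + 1)) :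
    ins σ m m = Fin.last n := by
  simp [ins, finSuccEquiv'_at, finSuccEquiv'_symm_none]

lemma ins_apply_succAbove (σ : Equiv.Perm (Fin n)) (m : Fin (n + 1)) (j : Fin n) :
    ins σ m (m.succAbove j) = (σ j).castSucc := by
  have : (finSuccEquiv' (Fin.last n)).symm (some (σ j)) = (σ j).castSucc := by
    rw [finSuccEquiv'_symm_some, Fin.succAbove_last_apply]
  simp [ins, finSuccEquiv'_succAbove, this]

lemma ins_symm_last (σ : Equiv.Perm (Fin n)) (m : Fin (n + 1)) :
    (ins σ m).symm (Fin.last n) = m := by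
  rw [Equiv.symm_apply_eq]
  exact (ins_apply_self σ m).symm

/-- Delete the largest value. -/
def del (π : Equiv.Perm (Fin (n + 1))) : Equiv.Perm (Fin n) :=
  Equiv.removeNone ((finSuccEquiv' (π.symm (Fin.last n))).symm.trans
    ((π : Fin (n+1) ≃ Fin (n+1)).trans (finSuccEquiv' (Fin.last n))))

lemma del_ins (σ : Equiv.Perm (Fin n)) (m : Fin (n + 1)) : del (ins σ m) = σ := by
  have h1 : (finSuccEquiv' m).symm.trans
      ((ins σ m : Fin (n+1) ≃ Fin (n+1)).trans (finSuccEquiv' (Fin.last n)))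
      = σ.optionCongr := by
    ext o
    cases o with
    | none =>
      simp [ins, finSuccEquiv'_symm_none, finSuccEquiv'_at]
    | some j =>
      have : (finSuccEquiv' (Fin.last n)) ((σ j).castSucc) = some (σ j) := by
        rw [← Fin.succAbove_last_apply, finSuccEquiv'_succAbove]
      simp [finSuccEquiv'_symm_some, ins_apply_succAbove, this]
  unfold del
  rw [ins_symm_last, h1, Equiv.removeNone_optionCongr]

lemma del_apply (π : Equiv.Perm (Fin (n + 1))) (j : Fin n) :
    ((del π) j).castSucc = π ((π.symm (Fin.last n)).succAbove j) := by
  set m := π.symm (Fin.last n) with hm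
  have hπm : π m = Fin.last n := by rw [hm]; exact π.apply_symm_apply _
  have hne : π (m.succAbove j) ≠ Fin.last n := by
    intro hc
    exact Fin.succAbove_ne m j (π.injective (hc.trans hπm.symm))
  obtain ⟨y, hy⟩ := Fin.exists_succAbove_eq hne
  rw [Fin.succAbove_last_apply] at hy
  set e := (finSuccEquiv' m).symm.trans
    ((π : Fin (n+1) ≃ Fin (n+1)).trans (finSuccEquiv' (Fin.last n))) with he
  have hsome : e (some j) = some y := by
    rw [he]
    simp only [Equiv.trans_apply, finSuccEquiv'_symm_some]
    rw [← hy, ← Fin.succAbove_last_apply, finSuccEquiv'_succAbove]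
  have : some ((del π) j) = some y := by
    rw [show (del π) j = Equiv.removeNone e j from rfl]
    rw [Equiv.removeNone_some e ⟨y, hsome⟩, hsome]
  rw [Option.some_injective _ this, hy]

lemma ins_del (π : Equiv.Perm (Fin (n + 1))) :
    ins (del π) (π.symm (Fin.last n)) = π := by
  apply Equiv.ext
  intro i
  by_cases h : i = π.symm (Fin.last n)
  · rw [h, ins_apply_self]
    exact (π.apply_symm_apply _).symm
  · obtain ⟨j, rfl⟩ := Fin.exists_succAbove_eq h
    rw [ins_apply_succAbove, del_apply]

lemma telescope_Icc (f : ℕ → ℤ) :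
    ∀ b a : ℕ, a ≤ b + 1 → ∑ p ∈ Finset.Icc a b, (f p - f (p + 1)) = f a - f (b + 1) := by
  intro b
  induction b with
  | zero =>
    intro a ha
    interval_cases a
    · simp
    · rw [show Finset.Icc 1 0 = ∅ from Finset.Icc_eq_empty (by omega)]
      simp
  | succ b ih =>
    intro a ha
    by_cases hab : a = b + 2
    · subst hab
      rw [Finset.Icc_eq_empty (by omega)]
      simp
    · have hsplit : Finset.Icc a (b + 1) = insert (b + 1) (Finset.Icc a b) := by
        ext p
        rw [Finset.mem_insert, Finset.mem_Icc, Finset.mem_Icc]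
        omega
      rw [hsplit, Finset.sum_insert (by rw [Finset.mem_Icc]; omega), ih a (by omega)]
      ring

/-- Membership in `Tset`. -/
lemma mem_Tset {N : ℕ} (π : Equiv.Perm (Fin N)) : π ∈ Tset N ↔ Avoids321 π := by
  simp [Tset]

lemma pval_lt {N : ℕ} (σ : Equiv.Perm (Fin N)) (i : ℕ) (h1 : 1 ≤ i) (h2 : i ≤ N) :
    pval σ i ≤ N := by
  unfold pval
  split
  · exact Nat.succ_le_of_lt (Fin.is_lt _)
  · omega

lemma mem_desSet {N : ℕ} (σ : Equiv.Perm (Fin N)) (c : ℕ) (hc : c + 1 < N) :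
    (c + 1) ∈ desSet σ ↔ (σ ⟨c + 1, hc⟩ : ℕ) < σ ⟨c, by omega⟩ := by
  unfold desSet pval
  rw [Finset.mem_filter, Finset.mem_Icc]
  have h1 : c + 1 - 1 = c := by omega
  have h2 : c + 1 + 1 - 1 = c + 1 := by omega
  rw [h1, h2, dif_pos hc, dif_pos (show c < N by omega)]
  constructor
  · rintro ⟨-, h⟩; omega
  · intro h; exact ⟨⟨by omega, by omega⟩, by omega⟩

lemma mem_desSet_bounds {N : ℕ} (σ : Equiv.Perm (Fin N)) {i : ℕ} (h : i ∈ desSet σ) :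
    1 ≤ i ∧ i ≤ N - 1 := by
  have := (Finset.mem_filter.1 h).1
  rwa [Finset.mem_Icc] at this

lemma ldes_le {N : ℕ} (σ : Equiv.Perm (Fin N)) : ldes σ ≤ N - 1 :=
  Finset.sup_le fun i hi => (mem_desSet_bounds σ hi).2

lemma le_ldes {N : ℕ} (σ : Equiv.Perm (Fin N)) {i : ℕ} (h : i ∈ desSet σ) : i ≤ ldes σ :=
  Finset.le_sup (f := id) h

lemma sigma_lt_succ {N : ℕ} (σ : Equiv.Perm (Fin N)) {c : ℕ} (hc : c + 1 < N)
    (h : ldes σ ≤ c) : (σ ⟨c, by omega⟩ : ℕ) < σ ⟨c + 1, hc⟩ := by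
  by_contra hlt
  have hne : (σ ⟨c + 1, hc⟩ : ℕ) ≠ (σ ⟨c, by omega⟩ : ℕ) := by
    intro hh
    have : (⟨c + 1, hc⟩ : Fin N) = ⟨c, by omega⟩ := σ.injective (Fin.val_injective hh)
    have := congrArg Fin.val this
    simp at this
  have hmem : (c + 1) ∈ desSet σ := (mem_desSet σ c hc).2 (by omega)
  have := le_ldes σ hmem
  omega

lemma sigma_mono_aux {N : ℕ} (σ : Equiv.Perm (Fin N)) (hl : ∀ t ∈ desSet σ, t ≤ ldes σ) :
    True := trivial

lemma sigma_mono {N : ℕ} (σ : Equiv.Perm (Fin N)) {a b : Fin N}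
    (hl : ldes σ ≤ (a : ℕ)) (hab : a < b) : (σ a : ℕ) < σ b := by
  have H : ∀ k : ℕ, ∀ b : Fin N, (b : ℕ) = (a : ℕ) + k + 1 → (σ a : ℕ) < σ b := by
    intro k
    induction k with
    | zero =>
      intro b hb
      have hc : (a : ℕ) + 1 < N := by have := b.isLt; omega
      have h1 := sigma_lt_succ σ hc hl
      have e1 : (⟨(a : ℕ), by omega⟩ : Fin N) = a := Fin.eta a _
      have e2 : (⟨(a : ℕ) + 1, hc⟩ : Fin N) = b := Fin.ext (show (a : ℕ) + 1 = (b : ℕ) by omega)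
      rwa [e1, e2] at h1
    | succ k ih =>
      intro b hb
      have hbN := b.isLt
      have hc : ((a : ℕ) + k + 1) + 1 < N := by omega
      have h1 := ih ⟨(a : ℕ) + k + 1, by omega⟩ rfl
      have h2 := sigma_lt_succ σ hc (by omega)
      have e2 : (⟨(a : ℕ) + k + 1 + 1, hc⟩ : Fin N) = b := Fin.ext (show (a : ℕ) + k + 1 + 1 = (b : ℕ) by omega)
      rw [e2] at h2
      calc (σ a : ℕ) < σ ⟨(a : ℕ) + k + 1, by omega⟩ := h1
        _ < σ b := h2
  have hab' : (a : ℕ) < (b : ℕ) := hab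
  exact H ((b : ℕ) - (a : ℕ) - 1) b (by omega)

lemma succAbove_of_lt {m : Fin (n + 1)} {j : Fin n} (h : (j : ℕ) < (m : ℕ)) :
    m.succAbove j = j.castSucc :=
  Fin.succAbove_of_castSucc_lt m j (by rwa [Fin.lt_def, Fin.coe_castSucc])

lemma succAbove_of_ge {m : Fin (n + 1)} {j : Fin n} (h : (m : ℕ) ≤ (j : ℕ)) :
    m.succAbove j = j.succ :=
  Fin.succAbove_of_le_castSucc m j (by rwa [Fin.le_def, Fin.coe_castSucc])

/-- value of `ins` at the insertion position, one-based. -/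
lemma pval_ins_self (σ : Equiv.Perm (Fin n)) (m : Fin (n + 1)) :
    pval (ins σ m) ((m : ℕ) + 1) = n + 1 := by
  unfold pval
  have hm : (m : ℕ) + 1 - 1 = (m : ℕ) := by omega
  rw [hm, dif_pos m.isLt]
  have : (⟨(m : ℕ), m.isLt⟩ : Fin (n + 1)) = m := Fin.eta m _
  rw [this, ins_apply_self]
  simp [Fin.last]

lemma pval_ins_lt (σ : Equiv.Perm (Fin n)) (m : Fin (n + 1)) {i : ℕ}
    (h1 : 1 ≤ i) (h2 : i ≤ (m : ℕ)) : pval (ins σ m) i = pval σ i := by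
  have hmn := m.isLt
  have hin : i - 1 < n := by omega
  have hin1 : i - 1 < n + 1 := by omega
  unfold pval
  rw [dif_pos hin1, dif_pos hin]
  have he : (⟨i - 1, hin1⟩ : Fin (n + 1)) = m.succAbove ⟨i - 1, hin⟩ := by
    rw [succAbove_of_lt (by simp; omega)]
    exact Fin.ext (by simp)
  rw [he, ins_apply_succAbove]
  simp

lemma pval_ins_gt (σ : Equiv.Perm (Fin n)) (m : Fin (n + 1)) {i : ℕ}
    (h1 : (m : ℕ) + 2 ≤ i) (h2 : i ≤ n + 1) : pval (ins σ m) i = pval σ (i - 1) := by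
  have hin : i - 1 - 1 < n := by omega
  have hin1 : i - 1 < n + 1 := by omega
  unfold pval
  rw [dif_pos hin1, dif_pos hin]
  have he : (⟨i - 1, hin1⟩ : Fin (n + 1)) = m.succAbove ⟨i - 1 - 1, hin⟩ := by
    rw [succAbove_of_ge (by simp; omega)]
    exact Fin.ext (by simp [Fin.val_succ]; omega)
  rw [he, ins_apply_succAbove]
  simp

lemma pval_ins_self' (σ : Equiv.Perm (Fin n)) (m : Fin (n + 1)) {i : ℕ}
    (hi : i = (m : ℕ) + 1) : pval (ins σ m) i = n + 1 := by
  subst hi; exact pval_ins_self σ m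

lemma ldes_ins (σ : Equiv.Perm (Fin n)) (m : Fin (n + 1)) (h : ldes σ ≤ (m : ℕ)) :
    ldes (ins σ m) = if (m : ℕ) = n then ldes σ else (m : ℕ) + 1 := by
  have hmn := m.isLt
  by_cases hm : (m : ℕ) = n
  · rw [if_pos hm]
    have hdes : desSet (ins σ m) = desSet σ := by
      ext i
      unfold desSet
      rw [Finset.mem_filter, Finset.mem_filter, Finset.mem_Icc, Finset.mem_Icc]
      constructor
      · rintro ⟨⟨hi1, hi2⟩, hlt⟩
        rw [Nat.add_sub_cancel] at hi2
        by_cases hin : i = n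
        · exfalso
          subst hin
          rw [pval_ins_self' σ m (i := i + 1) (by omega), pval_ins_lt σ m hi1 (by omega)] at hlt
          have := pval_lt σ i hi1 (by omega)
          omega
        · refine ⟨⟨hi1, by omega⟩, ?_⟩
          rwa [pval_ins_lt σ m (by omega) (by omega), pval_ins_lt σ m hi1 (by omega)] at hlt
      · rintro ⟨⟨hi1, hi2⟩, hlt⟩
        have hn1 : 1 ≤ n := by omega
        refine ⟨⟨hi1, by omega⟩, ?_⟩
        rwa [pval_ins_lt σ m (by omega) (by omega), pval_ins_lt σ m hi1 (by omega)]
    unfold ldes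
    rw [hdes]
  · rw [if_neg hm]
    have hmlt : (m : ℕ) < n := by omega
    apply le_antisymm
    · apply Finset.sup_le
      intro i hi
      by_contra hgt
      have hge : (m : ℕ) + 2 ≤ i := by simp at hgt; omega
      obtain ⟨hi1, hi2⟩ := mem_desSet_bounds _ hi
      rw [Nat.add_sub_cancel] at hi2
      have hlt := (Finset.mem_filter.1 hi).2
      rw [pval_ins_gt σ m (by omega) (by omega),
          pval_ins_gt σ m (by omega) (by omega)] at hlt
      -- hlt : pval σ (i + 1 - 1) < pval σ (i - 1)
      have e1 : i + 1 - 1 = i := by omega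
      rw [e1] at hlt
      unfold pval at hlt
      rw [dif_pos (show i - 1 < n by omega), dif_pos (show i - 1 - 1 < n by omega)] at hlt
      have := sigma_mono σ (a := ⟨i - 1 - 1, by omega⟩) (b := ⟨i - 1, by omega⟩)
        (by simp; omega) (by simp [Fin.lt_def]; omega)
      omega
    · apply le_ldes
      have hc : ((m : ℕ)) + 1 < n + 1 := by omega
      rw [mem_desSet (ins σ m) (m : ℕ) hc]
      -- goal about values at positions m and m+1 (zero-based)
      have hv1 : ((ins σ m) ⟨(m : ℕ), by omega⟩ : ℕ) = n := by
        rw [show (⟨(m : ℕ), by omega⟩ : Fin (n + 1)) = m from Fin.eta m _, ins_apply_self]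
        rfl
      have hv2 : ((ins σ m) ⟨(m : ℕ) + 1, hc⟩ : ℕ) < n := by
        have he : (⟨(m : ℕ) + 1, hc⟩ : Fin (n + 1)) = m.succAbove ⟨(m : ℕ), hmlt⟩ := by
          rw [succAbove_of_ge (by simp)]
          exact Fin.ext (by simp)
        rw [he, ins_apply_succAbove]
        simpa using (σ ⟨(m : ℕ), hmlt⟩).isLt
      omega

lemma coe_gt_of_succAbove_gt {m : Fin (n + 1)} {j : Fin n}
    (h : m < m.succAbove j) : (m : ℕ) ≤ (j : ℕ) := by
  by_contra hc
  rw [succAbove_of_lt (by omega)] at h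
  rw [Fin.lt_def, Fin.coe_castSucc] at h
  omega

lemma avoids_ins (σ : Equiv.Perm (Fin n)) (m : Fin (n + 1)) (hσ : Avoids321 σ)
    (h : ldes σ ≤ (m : ℕ)) : Avoids321 (ins σ m) := by
  rintro ⟨i, j, k, hij, hjk, h1, h2⟩
  by_cases hjm : j = m
  · subst hjm
    rw [ins_apply_self] at h2
    exact absurd h2 (not_lt.2 (Fin.le_last _))
  by_cases hkm : k = m
  · subst hkm
    rw [ins_apply_self] at h1
    exact absurd h1 (not_lt.2 (Fin.le_last _))
  obtain ⟨j', rfl⟩ := Fin.exists_succAbove_eq hjm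
  obtain ⟨k', rfl⟩ := Fin.exists_succAbove_eq hkm
  rw [ins_apply_succAbove, ins_apply_succAbove] at h1
  rw [Fin.castSucc_lt_castSucc_iff] at h1
  have hj'k' : j' < k' := by rwa [Fin.succAbove_lt_succAbove_iff] at hjk
  by_cases him : i = m
  · -- j' ≥ m, so σ is increasing there
    have hmj' : (m : ℕ) ≤ (j' : ℕ) := coe_gt_of_succAbove_gt (him ▸ hij)
    have := sigma_mono σ (a := j') (b := k') (by omega) hj'k'
    rw [Fin.lt_def] at h1
    omega
  · obtain ⟨i', rfl⟩ := Fin.exists_succAbove_eq him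
    simp only [ins_apply_succAbove] at h2
    rw [Fin.castSucc_lt_castSucc_iff] at h2
    have hi'j' : i' < j' := by rwa [Fin.succAbove_lt_succAbove_iff] at hij
    exact hσ ⟨i', j', k', hi'j', hj'k', h1, h2⟩

lemma avoids_del (π : Equiv.Perm (Fin (n + 1))) (hπ : Avoids321 π) :
    Avoids321 (del π) := by
  rintro ⟨i, j, k, hij, hjk, h1, h2⟩
  set m := π.symm (Fin.last n) with hm
  refine hπ ⟨m.succAbove i, m.succAbove j, m.succAbove k, ?_, ?_, ?_, ?_⟩
  · rwa [Fin.succAbove_lt_succAbove_iff]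
  · rwa [Fin.succAbove_lt_succAbove_iff]
  · rw [← del_apply, ← del_apply, Fin.castSucc_lt_castSucc_iff]; exact h1
  · rw [← del_apply, ← del_apply, Fin.castSucc_lt_castSucc_iff]; exact h2

lemma ldes_del_le (π : Equiv.Perm (Fin (n + 1))) (hπ : Avoids321 π) :
    ldes (del π) ≤ ((π.symm (Fin.last n) : ℕ)) := by
  set m := π.symm (Fin.last n) with hm
  apply Finset.sup_le
  intro t ht
  by_contra hgt
  simp only [id] at hgt
  push_neg at hgt
  obtain ⟨ht1, ht2⟩ := mem_desSet_bounds _ ht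
  have hcn : t - 1 + 1 < n := by omega
  have hdes : ((del π) ⟨t - 1 + 1, hcn⟩ : ℕ) < (del π) ⟨t - 1, by omega⟩ := by
    have := (mem_desSet (del π) (t - 1) hcn).1 (by rwa [show t - 1 + 1 = t by omega])
    exact this
  -- build a 321 pattern in π at positions m, succAbove (t-1), succAbove t
  set a : Fin n := ⟨t - 1, by omega⟩ with ha
  set b : Fin n := ⟨t - 1 + 1, hcn⟩ with hb
  have hma : (m : ℕ) ≤ (a : ℕ) := by simp [ha]; omega
  have hpm : π m = Fin.last n := π.apply_symm_apply _
  refine hπ ⟨m, m.succAbove a, m.succAbove b, ?_, ?_, ?_, ?_⟩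
  · rw [succAbove_of_ge hma, Fin.lt_def, Fin.val_succ]
    simp [ha]; omega
  · rw [Fin.succAbove_lt_succAbove_iff, Fin.lt_def]
    simp [ha, hb]
  · rw [← del_apply, ← del_apply, Fin.castSucc_lt_castSucc_iff, Fin.lt_def]
    exact hdes
  · rw [← del_apply, hpm]
    exact Fin.castSucc_lt_last _

end LdesAux

open LdesAux

theorem ldes_gf_recursion (n : ℕ) (hn : 1 ≤ n) (q : ℤ) :
    (1 - q) * ∑ π ∈ Tset (n + 1), q ^ ldes π =
      (∑ π ∈ Tset n, q ^ ldes π) - q ^ (n + 1) * (Tset n).card := by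
  classical
  have key : ∑ π ∈ Tset (n + 1), q ^ ldes π
      = ∑ x ∈ (Tset n).sigma (fun σ => Finset.Icc (ldes σ) n),
          q ^ (if x.2 = n then ldes x.1 else x.2 + 1) := by
    refine Finset.sum_bij'
      (fun π _ => (⟨del π, ((π.symm (Fin.last n) : ℕ))⟩ :
          Σ _ : Equiv.Perm (Fin n), ℕ))
      (fun x hx => ins x.1 (⟨x.2, by
        have := (Finset.mem_sigma.1 hx).2
        rw [Finset.mem_Icc] at this
        omega⟩ : Fin (n + 1)))
      ?_ ?_ ?_ ?_ ?_
    · -- hi : forward membership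
      intro π hπ
      rw [Finset.mem_sigma]
      refine ⟨(mem_Tset _).2 (avoids_del π ((mem_Tset _).1 hπ)), ?_⟩
      rw [Finset.mem_Icc]
      exact ⟨ldes_del_le π ((mem_Tset _).1 hπ), Fin.is_le _⟩
    · -- hj : backward membership
      intro x hx
      obtain ⟨h1, h2⟩ := Finset.mem_sigma.1 hx
      rw [Finset.mem_Icc] at h2
      exact (mem_Tset _).2 (avoids_ins x.1 _ ((mem_Tset _).1 h1) (by simpa using h2.1))
    · -- left inverse
      intro π hπ
      have he : (⟨((π.symm (Fin.last n) : ℕ)), by omega⟩ : Fin (n + 1))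
          = π.symm (Fin.last n) := Fin.eta _ _
      show ins (del π) _ = π
      rw [show (⟨((π.symm (Fin.last n) : ℕ)), _⟩ : Fin (n + 1)) = π.symm (Fin.last n)
        from Fin.eta _ _]
      exact ins_del π
    · -- right inverse
      rintro ⟨σ, p⟩ hx
      have h2 := (Finset.mem_sigma.1 hx).2
      rw [Finset.mem_Icc] at h2
      beta_reduce
      rw [del_ins, ins_symm_last]
    · -- weights
      intro π hπ
      have hπ' := (mem_Tset _).1 hπ
      have hld := ldes_del_le π hπ'
      have hw := ldes_ins (del π) (π.symm (Fin.last n)) hld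
      have hfin : ldes π = if ((π.symm (Fin.last n) : ℕ)) = n then ldes (del π)
          else ((π.symm (Fin.last n) : ℕ)) + 1 := by
        conv_lhs => rw [← ins_del π]
        exact hw
      exact congrArg (fun t => q ^ t) hfin
  rw [key, Finset.sum_sigma, Finset.mul_sum]
  have inner : ∀ σ ∈ Tset n,
      (1 - q) * ∑ p ∈ Finset.Icc (ldes σ) n,
          q ^ (if p = n then ldes σ else p + 1)
        = q ^ ldes σ - q ^ (n + 1) := by
    intro σ hσ
    have hl : ldes σ ≤ n - 1 := ldes_le σ
    have hsplit : Finset.Icc (ldes σ) n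
        = insert n (Finset.Icc (ldes σ) (n - 1)) := by
      ext p
      rw [Finset.mem_insert, Finset.mem_Icc, Finset.mem_Icc]
      omega
    rw [hsplit, Finset.sum_insert (by rw [Finset.mem_Icc]; omega), if_pos rfl]
    have hcong : ∑ p ∈ Finset.Icc (ldes σ) (n - 1),
          q ^ (if p = n then ldes σ else p + 1)
        = ∑ p ∈ Finset.Icc (ldes σ) (n - 1), q ^ (p + 1) := by
      apply Finset.sum_congr rfl
      intro p hp
      rw [Finset.mem_Icc] at hp
      rw [if_neg (by omega)]
    rw [hcong]
    have htel : (1 - q) * ∑ p ∈ Finset.Icc (ldes σ) (n - 1), q ^ (p + 1)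
        = q ^ (ldes σ + 1) - q ^ (n + 1) := by
      rw [Finset.mul_sum]
      have : ∀ p ∈ Finset.Icc (ldes σ) (n - 1),
          (1 - q) * q ^ (p + 1) = q ^ (p + 1) - q ^ (p + 1 + 1) := by
        intro p _; ring
      rw [Finset.sum_congr rfl this]
      have htel' := telescope_Icc (fun p => q ^ (p + 1)) (n - 1) (ldes σ) (by omega)
      rw [htel']
      congr 2
      omega
    rw [mul_add, htel]
    ring
  rw [Finset.sum_congr rfl inner, Finset.sum_sub_distrib, Finset.sum_const,
    nsmul_eq_mul]
  ring
end

section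
/- The generating function for the 'last descent' statistic over 321-avoiding permutations of S_n equals the generating function for 'last descent' over Dyck paths of length 2n, and also equals the generating function for 'lind - 1' over Dyck paths of length 2n: Σ_{π∈T_n} q^{ldes(π)} = Σ_{p∈P_n} q^{ldes(p)} = Σ_{p∈P_n} q^{lind(p)-1}. -/
/-!
Both generating functions satisfy the same recursion in `n`.  Removing the letter `n + 1` from a
321-avoiding permutation, found at zero-based position `a`, leaves a 321-avoiding `π` with
`ldes π ≤ a`, and conversely every such insertion avoids 321; the inserted permutation has last
descent `a + 1`, or `ldes π` when `a = n`.  Removing the last peak of a Dyck path, found at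
position `lind = a + 1`, leaves a Dyck path `p` with `ldes p ≤ a`, and conversely; the new path
has `ldes = a + 1`, or `ldes p` when `a = n`.  As `a` runs over `[s, n]`, both `a + 1` (or `s` at
`a = n`) and `lind - 1 = a` run over `[s, n]`, so all three sums for `n + 1` equal
`∑_{x of size n} ∑_{a = ldes x}^{n} q ^ a`, and induction on `n` concludes.
-/

open Finset

section Sums

variable {α β M : Type*} [AddCommMonoid M]

theorem sum_eq_sum_sum_Icc_of_insertion {A : Finset α} {B : Finset β} {n : ℕ} (s : β → ℕ)
    (ins : β → ℕ → α) (del : α → β) (pos : α → ℕ)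
    (ins_mem : ∀ y ∈ B, ∀ a ∈ Icc (s y) n, ins y a ∈ A)
    (del_mem : ∀ x ∈ A, del x ∈ B ∧ pos x ∈ Icc (s (del x)) n)
    (del_ins : ∀ y ∈ B, ∀ a ∈ Icc (s y) n, del (ins y a) = y ∧ pos (ins y a) = a)
    (ins_del : ∀ x ∈ A, ins (del x) (pos x) = x) (g : α → M) :
    ∑ x ∈ A, g x = ∑ y ∈ B, ∑ a ∈ Icc (s y) n, g (ins y a) := by
  rw [sum_sigma']
  refine sum_nbij' (fun x => ⟨del x, pos x⟩) (fun z => ins z.1 z.2) ?_ ?_ ?_ ?_ ?_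
  · intro x hx
    simpa using del_mem x hx
  · rintro ⟨y, a⟩ h
    rw [mem_sigma] at h
    exact ins_mem y h.1 a h.2
  · exact ins_del
  · rintro ⟨y, a⟩ h
    rw [mem_sigma] at h
    obtain ⟨h₁, h₂⟩ := del_ins y h.1 a h.2
    simp [h₁, h₂]
  · intro x hx
    rw [ins_del x hx]

theorem sum_Icc_rotate (f : ℕ → M) {s n : ℕ} (h : s ≤ n) :
    ∑ a ∈ Icc s n, f (if a = n then s else a + 1) = ∑ a ∈ Icc s n, f a := by
  refine sum_nbij' (fun a => if a = n then s else a + 1) (fun b => if b = s then n else b - 1)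
    ?_ ?_ ?_ ?_ (fun _ _ => rfl) <;> intro a ha <;> simp only [mem_Icc] at ha ⊢ <;>
    split_ifs <;> omega

end Sums

section DyckSequences

def stepSeq {m : ℕ} (p : Fin m → Bool) (t : ℕ) : Bool :=
  if h : t < m then p ⟨t, h⟩ else false

lemma stepSeq_val {m : ℕ} (p : Fin m → Bool) (t : Fin m) : stepSeq p t = p t := dif_pos t.2

lemma stepSeq_of_le {m : ℕ} (p : Fin m → Bool) {t : ℕ} (h : m ≤ t) : stepSeq p t = false :=
  dif_neg (by omega)

lemma stepSeq_restrict {m : ℕ} {F : ℕ → Bool} (hF : ∀ t, m ≤ t → F t = false) :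
    stepSeq (fun t : Fin m => F t) = F := by
  funext t
  by_cases h : t < m
  · exact dif_pos h
  · rw [stepSeq_of_le _ (by omega), hF t (by omega)]

def upCount (f : ℕ → Bool) (k : ℕ) : ℕ := ∑ i ∈ range k, if f i then 1 else 0

def IsDyckSeq (n : ℕ) (f : ℕ → Bool) : Prop :=
  upCount f (2 * n) = n ∧ ∀ k ≤ 2 * n, k ≤ 2 * upCount f k

lemma upCount_add (f : ℕ → Bool) (k r : ℕ) :
    upCount f (k + r) = upCount f k + upCount (fun i => f (k + i)) r :=
  sum_range_add _ k r

lemma card_filter_lt_eq_upCount {m : ℕ} (p : Fin m → Bool) (k : ℕ) :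
    #{i : Fin m | (i : ℕ) < k ∧ p i = true} = upCount (stepSeq p) k := by
  rw [upCount, sum_boole]
  refine card_bij (fun i _ => i) (fun i hi => ?_) (fun i _ j _ h => Fin.ext h) (fun t ht => ?_)
  · simp_all [stepSeq]
  · rw [mem_filter, mem_range, stepSeq] at ht
    split_ifs at ht with h
    · exact ⟨⟨t, h⟩, by simpa using ht, rfl⟩
    · exact ht.2.elim

lemma isDyckPred_iff {n : ℕ} (p : Fin (2 * n) → Bool) :
    IsDyckPred n p ↔ IsDyckSeq n (stepSeq p) := by
  have htop : #{i : Fin (2 * n) | p i = true} = upCount (stepSeq p) (2 * n) := by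
    rw [← card_filter_lt_eq_upCount]
    simp
  simp only [IsDyckPred, IsDyckSeq, htop, card_filter_lt_eq_upCount]

end DyckSequences

section PeakInsertion

variable (f : ℕ → Bool) (a : ℕ)

def insertPeak (t : ℕ) : Bool :=
  if t < a then f t else if t = a then true else if t = a + 1 then false else f (t - 2)

def deletePeak (t : ℕ) : Bool := if t < a then f t else f (t + 2)

lemma deletePeak_insertPeak : deletePeak (insertPeak f a) a = f := by
  funext t
  unfold deletePeak insertPeak
  split_ifs <;> first | rfl | omega

variable {f a}

lemma insertPeak_deletePeak (hU : f a = true) (hD : f (a + 1) = false) :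
    insertPeak (deletePeak f a) a = f := by
  funext t
  simp only [deletePeak, insertPeak]
  split_ifs with h₁ h₂ h₃ h₄
  · rfl
  · rw [h₂, hU]
  · rw [h₃, hD]
  · omega
  · congr 1
    omega

lemma upCount_insertPeak_of_le {k : ℕ} (hk : k ≤ a) :
    upCount (insertPeak f a) k = upCount f k :=
  sum_congr rfl fun i hi => by
    have : i < a := by rw [mem_range] at hi; omega
    simp only [insertPeak, this, if_true]

lemma upCount_insertPeak_succ : upCount (insertPeak f a) (a + 1) = upCount f a + 1 := by
  rw [upCount, sum_range_succ, ← upCount, upCount_insertPeak_of_le le_rfl]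
  simp [insertPeak]

lemma upCount_insertPeak_add_two {k : ℕ} (hk : a ≤ k) :
    upCount (insertPeak f a) (k + 2) = upCount f k + 1 := by
  obtain ⟨r, rfl⟩ := Nat.exists_eq_add_of_le hk
  have hshift : (fun i => insertPeak f a (a + 2 + i)) = fun i => f (a + i) := by
    funext i
    rw [insertPeak, if_neg (by omega), if_neg (by omega), if_neg (by omega)]
    congr 1
    omega
  have hpeak : upCount (insertPeak f a) (a + 2) = upCount f a + 1 := by
    rw [upCount, sum_range_succ, ← upCount, upCount_insertPeak_succ]
    simp [insertPeak]
  rw [show a + r + 2 = a + 2 + r by omega, upCount_add, hshift, hpeak, upCount_add]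
  ring

lemma IsDyckSeq.insertPeak {n : ℕ} (hf : IsDyckSeq n f) (ha : a ≤ 2 * n) :
    IsDyckSeq (n + 1) (insertPeak f a) := by
  obtain ⟨htop, hpre⟩ := hf
  refine ⟨by rw [show 2 * (n + 1) = 2 * n + 2 by ring, upCount_insertPeak_add_two ha, htop],
    fun k hk => ?_⟩
  rcases le_or_gt k a with hka | hka
  · rw [upCount_insertPeak_of_le hka]
    exact hpre k (by omega)
  obtain rfl | hka := eq_or_lt_of_le (Nat.succ_le_of_lt hka)
  · have := hpre a ha
    rw [upCount_insertPeak_succ]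
    omega
  · obtain ⟨k, rfl⟩ : ∃ j, k = j + 2 := ⟨k - 2, by omega⟩
    have := hpre k (by omega)
    rw [upCount_insertPeak_add_two (by omega)]
    omega

lemma IsDyckSeq.deletePeak {n : ℕ} (hf : IsDyckSeq (n + 1) f) (ha : a ≤ 2 * n)
    (hU : f a = true) (hD : f (a + 1) = false) : IsDyckSeq n (deletePeak f a) := by
  obtain ⟨htop, hpre⟩ := hf
  rw [← insertPeak_deletePeak hU hD] at htop hpre
  refine ⟨?_, fun k hk => ?_⟩
  · rw [show 2 * (n + 1) = 2 * n + 2 by ring, upCount_insertPeak_add_two ha] at htop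
    omega
  rcases le_or_gt k a with hka | hka
  · rw [← upCount_insertPeak_of_le hka]
    exact hpre k (by omega)
  · have := hpre (k + 2) (by omega)
    rw [upCount_insertPeak_add_two hka.le] at this
    omega

end PeakInsertion

section Peaks

variable {f : ℕ → Bool} {a : ℕ}

variable (f) in
/-- One-based, as in `pathDes`: `i` is a peak when the zero-based steps `i - 1`, `i` are
up, down. -/
def peaks (B : ℕ) : Finset ℕ := (Icc 1 B).filter (fun i => f (i - 1) = true ∧ f i = false)

variable (f) in
def lastPeak (B : ℕ) : ℕ := (peaks f B).sup id

lemma mem_peaks {B i : ℕ} :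
    i ∈ peaks f B ↔ (1 ≤ i ∧ i ≤ B) ∧ f (i - 1) = true ∧ f i = false := by
  rw [peaks, mem_filter, mem_Icc]

lemma lastPeak_le_iff {B c : ℕ} : lastPeak f B ≤ c ↔ ∀ i ∈ peaks f B, i ≤ c :=
  Finset.sup_le_iff

lemma le_lastPeak {B i : ℕ} (h : i ∈ peaks f B) : i ≤ lastPeak f B :=
  le_sup (f := id) h

lemma lastPeak_mem {B : ℕ} (h : (peaks f B).Nonempty) : lastPeak f B ∈ peaks f B := by
  unfold lastPeak
  simpa using sup_mem_of_nonempty (f := id) h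

lemma peaks_mono {B B' : ℕ} (h : B ≤ B') : peaks f B ⊆ peaks f B' :=
  filter_subset_filter _ (Icc_subset_Icc_right h)

lemma lastPeak_mono {B B' : ℕ} (h : B ≤ B') : lastPeak f B ≤ lastPeak f B' :=
  sup_mono (peaks_mono h)

lemma peaks_nonempty_of_eq_false (h0 : f 0 = true) {j : ℕ} (hj : f j = false) :
    (peaks f j).Nonempty := by
  induction j with
  | zero => exact absurd h0 (by simp [hj])
  | succ j ih =>
    cases hfj : f j
    · exact (ih hfj).mono (peaks_mono j.le_succ)
    · exact ⟨j + 1, mem_peaks.2 ⟨⟨by omega, le_rfl⟩, hfj, hj⟩⟩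

lemma IsDyckSeq.peaks_nonempty {n : ℕ} (hf : IsDyckSeq (n + 1) f) :
    (peaks f (n + 1)).Nonempty := by
  obtain ⟨htop, hpre⟩ := hf
  have h0 : f 0 = true := by
    have := hpre 1 (by omega)
    simp only [upCount, sum_range_one] at this
    by_contra h
    simp [h] at this
  obtain ⟨j, hj, hfj⟩ : ∃ j ≤ n + 1, f j = false := by
    by_contra! hall
    have hup : upCount f (n + 2) = n + 2 := by
      rw [upCount, sum_congr rfl fun i hi => if_pos (by simpa using hall i (by simp at hi; omega))]
      simp
    rw [show 2 * (n + 1) = n + 2 + n by ring, upCount_add, hup] at htop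
    omega
  exact (peaks_nonempty_of_eq_false h0 hfj).mono (peaks_mono hj)

lemma peaks_insertPeak_self : peaks (insertPeak f a) a = peaks f (a - 1) := by
  ext i
  simp only [mem_peaks, insertPeak]
  constructor
  · rintro ⟨⟨h1, h2⟩, hU, hD⟩
    rcases eq_or_lt_of_le h2 with rfl | h2
    · simp at hD
    · rw [if_pos (by omega)] at hU
      rw [if_pos h2] at hD
      exact ⟨⟨h1, by omega⟩, hU, hD⟩
  · rintro ⟨⟨h1, h2⟩, hU, hD⟩
    rw [if_pos (by omega), if_pos (by omega)]
    exact ⟨⟨h1, by omega⟩, hU, hD⟩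

lemma add_two_mem_peaks_insertPeak_iff {B i : ℕ} (hi : a < i) :
    i + 2 ∈ peaks (insertPeak f a) (B + 2) ↔ i ∈ peaks f B := by
  simp only [mem_peaks, insertPeak, if_neg (show ¬ i + 2 - 1 < a by omega),
    if_neg (show ¬ i + 2 - 1 = a by omega), if_neg (show ¬ i + 2 - 1 = a + 1 by omega),
    if_neg (show ¬ i + 2 < a by omega), if_neg (show ¬ i + 2 = a by omega),
    if_neg (show ¬ i + 2 = a + 1 by omega), show i + 2 - 1 - 2 = i - 1 by omega,
    Nat.add_sub_cancel, Nat.add_le_add_iff_right]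
  exact and_congr_left' (and_congr_left' ⟨fun _ => by omega, fun _ => by omega⟩)

lemma lastPeak_insertPeak {B : ℕ} (hB : a + 1 ≤ B) (hf : lastPeak f (B - 2) ≤ a) :
    lastPeak (insertPeak f a) B = a + 1 := by
  refine le_antisymm (lastPeak_le_iff.2 fun i hi => ?_) (le_lastPeak ?_)
  · by_contra! hlt
    obtain ⟨i, rfl⟩ : ∃ j, i = j + 2 := ⟨i - 2, by omega⟩
    rcases eq_or_lt_of_le (show a ≤ i by omega) with rfl | hai
    · simp [mem_peaks, insertPeak] at hi
    · have := le_lastPeak ((add_two_mem_peaks_insertPeak_iff (B := B - 2) hai).1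
        (by rwa [show B - 2 + 2 = B by have := (mem_peaks.1 hi).1.2; omega]))
      omega
  · simp [mem_peaks, insertPeak, hB]

lemma lastPeak_deletePeak_le {B : ℕ} (hf : lastPeak f B ≤ a + 1) :
    lastPeak (deletePeak f a) (B - 2) ≤ a := by
  refine lastPeak_le_iff.2 fun i hi => ?_
  by_contra! hlt
  have hi' : i + 2 ∈ peaks f B := by
    simp only [mem_peaks, deletePeak, if_neg (show ¬ i < a by omega),
      if_neg (show ¬ i - 1 < a by omega)] at hi ⊢
    rw [show i + 2 - 1 = i - 1 + 2 by omega]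
    exact ⟨⟨by omega, by omega⟩, hi.2⟩
  have := le_lastPeak hi'
  omega

end Peaks

namespace DyckPath

variable {n : ℕ}

lemma isDyckSeq (p : DyckPath n) : IsDyckSeq n (stepSeq p.1) := (isDyckPred_iff _).1 p.2

lemma pathLdes_eq (p : DyckPath n) : pathLdes p = lastPeak (stepSeq p.1) (n - 1) := rfl

lemma pathLind_eq (p : DyckPath n) : pathLind p = lastPeak (stepSeq p.1) n := rfl

lemma pathLdes_le (p : DyckPath n) : pathLdes p ≤ n - 1 :=
  (pathLdes_eq p).trans_le <| lastPeak_le_iff.2 fun _ hi => (mem_peaks.1 hi).1.2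

lemma insertPeak_stepSeq_of_le (p : DyckPath n) {a t : ℕ} (ha : a ≤ n)
    (ht : 2 * (n + 1) ≤ t) : insertPeak (stepSeq p.1) a t = false := by
  rw [insertPeak, if_neg (by omega), if_neg (by omega), if_neg (by omega),
    stepSeq_of_le _ (by omega)]

/-- `a` is capped at `n`, so that the result is always a Dyck path. -/
def insertPeakAt (p : DyckPath n) (a : ℕ) : DyckPath (n + 1) :=
  ⟨fun t => insertPeak (stepSeq p.1) (min a n) t, by
    rw [isDyckPred_iff, stepSeq_restrict]
    · exact p.isDyckSeq.insertPeak (by omega)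
    · exact fun t => p.insertPeak_stepSeq_of_le (min_le_right a n)⟩

lemma stepSeq_insertPeakAt (p : DyckPath n) {a : ℕ} (ha : a ≤ n) :
    stepSeq (p.insertPeakAt a).1 = insertPeak (stepSeq p.1) a := by
  rw [insertPeakAt, stepSeq_restrict fun t => p.insertPeak_stepSeq_of_le (min_le_right a n),
    min_eq_left ha]

lemma pathLind_insertPeakAt (p : DyckPath n) {a : ℕ} (h₁ : pathLdes p ≤ a) (h₂ : a ≤ n) :
    pathLind (p.insertPeakAt a) = a + 1 := by
  rw [pathLind_eq, stepSeq_insertPeakAt p h₂]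
  exact lastPeak_insertPeak (by omega) h₁

lemma pathLdes_insertPeakAt (p : DyckPath n) {a : ℕ} (h₁ : pathLdes p ≤ a) (h₂ : a ≤ n) :
    pathLdes (p.insertPeakAt a) = if a = n then pathLdes p else a + 1 := by
  rw [pathLdes_eq, stepSeq_insertPeakAt p h₂, Nat.add_sub_cancel]
  split_ifs with h
  · rw [lastPeak, h, peaks_insertPeak_self]
    rfl
  · exact lastPeak_insertPeak (by omega) ((lastPeak_mono (by omega)).trans h₁)

lemma pathLind_mem_peaks (p : DyckPath (n + 1)) : pathLind p ∈ peaks (stepSeq p.1) (n + 1) :=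
  lastPeak_mem p.isDyckSeq.peaks_nonempty

lemma deletePeak_stepSeq_of_le (p : DyckPath (n + 1)) {a t : ℕ} (ha : a ≤ n)
    (ht : 2 * n ≤ t) : deletePeak (stepSeq p.1) a t = false := by
  rw [deletePeak, if_neg (by omega), stepSeq_of_le _ (by omega)]

def eraseLastPeak (p : DyckPath (n + 1)) : DyckPath n :=
  ⟨fun t => deletePeak (stepSeq p.1) (pathLind p - 1) t, by
    obtain ⟨⟨h₁, h₂⟩, hU, hD⟩ := mem_peaks.1 p.pathLind_mem_peaks
    rw [isDyckPred_iff, stepSeq_restrict fun t => p.deletePeak_stepSeq_of_le (by omega)]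
    exact p.isDyckSeq.deletePeak (by omega) hU (by rwa [Nat.sub_add_cancel h₁])⟩

lemma stepSeq_eraseLastPeak (p : DyckPath (n + 1)) :
    stepSeq p.eraseLastPeak.1 = deletePeak (stepSeq p.1) (pathLind p - 1) :=
  stepSeq_restrict fun _ => p.deletePeak_stepSeq_of_le
    (by have := (mem_peaks.1 p.pathLind_mem_peaks).1; omega)

lemma eraseLastPeak_insertPeakAt (p : DyckPath n) {a : ℕ} (h₁ : pathLdes p ≤ a)
    (h₂ : a ≤ n) : (p.insertPeakAt a).eraseLastPeak = p := by
  refine Subtype.ext (funext fun t => ?_)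
  change deletePeak (stepSeq (p.insertPeakAt a).1) (pathLind (p.insertPeakAt a) - 1) t = p.1 t
  rw [pathLind_insertPeakAt p h₁ h₂, stepSeq_insertPeakAt p h₂, Nat.add_sub_cancel,
    deletePeak_insertPeak, stepSeq_val]

lemma insertPeakAt_eraseLastPeak (p : DyckPath (n + 1)) :
    p.eraseLastPeak.insertPeakAt (pathLind p - 1) = p := by
  obtain ⟨⟨h₁, h₂⟩, hU, hD⟩ := mem_peaks.1 p.pathLind_mem_peaks
  refine Subtype.ext (funext fun t => ?_)
  change insertPeak (stepSeq p.eraseLastPeak.1) (min (pathLind p - 1) n) t = p.1 t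
  rw [stepSeq_eraseLastPeak, min_eq_left (by omega),
    insertPeak_deletePeak hU (by rwa [Nat.sub_add_cancel h₁]), stepSeq_val]

lemma pathLdes_eraseLastPeak_le (p : DyckPath (n + 1)) :
    pathLdes p.eraseLastPeak ≤ pathLind p - 1 := by
  have hL := (mem_peaks.1 p.pathLind_mem_peaks).1
  rw [pathLdes_eq, stepSeq_eraseLastPeak, show n - 1 = n + 1 - 2 by omega]
  exact lastPeak_deletePeak_le (by rw [← pathLind_eq]; omega)

theorem sum_succ {M : Type*} [AddCommMonoid M] (g : DyckPath (n + 1) → M) :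
    ∑ p, g p = ∑ p : DyckPath n, ∑ a ∈ Icc (pathLdes p) n, g (p.insertPeakAt a) := by
  refine sum_eq_sum_sum_Icc_of_insertion pathLdes insertPeakAt eraseLastPeak (pathLind · - 1)
    (fun _ _ _ _ => mem_univ _) (fun p _ => ⟨mem_univ _, mem_Icc.2 ⟨?_, ?_⟩⟩)
    (fun p _ a ha => ?_) (fun p _ => insertPeakAt_eraseLastPeak p) g
  · exact pathLdes_eraseLastPeak_le p
  · have := (mem_peaks.1 p.pathLind_mem_peaks).1; omega
  · rw [mem_Icc] at ha
    refine ⟨eraseLastPeak_insertPeakAt p ha.1 ha.2, ?_⟩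
    rw [pathLind_insertPeakAt p ha.1 ha.2, Nat.add_sub_cancel]

theorem sum_succ_pathLdes {M : Type*} [AddCommMonoid M] (f : ℕ → M) :
    ∑ p : DyckPath (n + 1), f (pathLdes p) =
      ∑ p : DyckPath n, ∑ a ∈ Icc (pathLdes p) n, f a := by
  rw [sum_succ]
  refine sum_congr rfl fun p _ => ?_
  rw [← sum_Icc_rotate f (p.pathLdes_le.trans (Nat.sub_le n 1))]
  refine sum_congr rfl fun a ha => ?_
  rw [mem_Icc] at ha
  rw [p.pathLdes_insertPeakAt ha.1 ha.2]

theorem sum_succ_pathLind {M : Type*} [AddCommMonoid M] (f : ℕ → M) :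
    ∑ p : DyckPath (n + 1), f (pathLind p - 1) =
      ∑ p : DyckPath n, ∑ a ∈ Icc (pathLdes p) n, f a := by
  rw [sum_succ]
  refine sum_congr rfl fun p _ => sum_congr rfl fun a ha => ?_
  rw [mem_Icc] at ha
  rw [p.pathLind_insertPeakAt ha.1 ha.2, Nat.add_sub_cancel]

end DyckPath

section InsertMax

open Equiv

variable {n : ℕ}

/-- Insert the letter `n + 1` (that is, `Fin.last n`) at position `a`. -/
def insertMax (π : Perm (Fin n)) (a : Fin (n + 1)) : Perm (Fin (n + 1)) :=
  ((finSuccEquiv' a).trans (optionCongr π)).trans (finSuccEquiv' (Fin.last n)).symm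

@[simp] lemma insertMax_self (π : Perm (Fin n)) (a : Fin (n + 1)) :
    insertMax π a a = Fin.last n := by
  simp [insertMax]

@[simp] lemma insertMax_succAbove (π : Perm (Fin n)) (a : Fin (n + 1)) (x : Fin n) :
    insertMax π a (a.succAbove x) = (π x).castSucc := by
  simp [insertMax]

lemma insertMax_symm_last (π : Perm (Fin n)) (a : Fin (n + 1)) :
    (insertMax π a).symm (Fin.last n) = a := by
  rw [Equiv.symm_apply_eq, insertMax_self]

def eraseMax (π : Perm (Fin (n + 1))) : Perm (Fin n) :=
  removeNone (((finSuccEquiv' (π.symm (Fin.last n))).symm.trans π).trans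
    (finSuccEquiv' (Fin.last n)))

lemma castSucc_eraseMax (π : Perm (Fin (n + 1))) (x : Fin n) :
    (eraseMax π x).castSucc = π ((π.symm (Fin.last n)).succAbove x) := by
  have hne : π ((π.symm (Fin.last n)).succAbove x) ≠ Fin.last n := fun h =>
    Fin.succAbove_ne _ x (π.injective (h.trans (π.apply_symm_apply _).symm))
  obtain ⟨m, hm⟩ := Fin.exists_castSucc_eq.2 hne
  have : some (eraseMax π x) = some m := by
    rw [eraseMax, removeNone_some] <;> simp [← hm]
  rw [Option.some_injective _ this, hm]

lemma eraseMax_insertMax (π : Perm (Fin n)) (a : Fin (n + 1)) : eraseMax (insertMax π a) = π :=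
  Equiv.ext fun x => Fin.castSucc_injective n <| by
    rw [castSucc_eraseMax, insertMax_symm_last, insertMax_succAbove]

lemma insertMax_eraseMax (π : Perm (Fin (n + 1))) :
    insertMax (eraseMax π) (π.symm (Fin.last n)) = π := by
  refine Equiv.ext fun i => ?_
  by_cases hi : i = π.symm (Fin.last n)
  · rw [hi, insertMax_self, Equiv.apply_symm_apply]
  · obtain ⟨x, rfl⟩ := Fin.exists_succAbove_eq hi
    rw [insertMax_succAbove, castSucc_eraseMax]

end InsertMax

section LastDescent

open Equiv

variable {n : ℕ}

lemma pval_val_add_one (π : Perm (Fin n)) (x : Fin n) : pval π (x + 1) = π x + 1 := by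
  rw [pval, dif_pos (by simp)]
  rfl

lemma mem_desSet_iff_s14 {π : Perm (Fin n)} {x y : Fin n} (hxy : (y : ℕ) = x + 1) :
    (y : ℕ) ∈ desSet π ↔ π y < π x := by
  rw [desSet, mem_filter, mem_Icc, pval_val_add_one, hxy, pval_val_add_one, ← hxy, Fin.lt_def]
  have := y.2
  omega

lemma exists_of_mem_desSet {π : Perm (Fin n)} {t : ℕ} (ht : t ∈ desSet π) :
    ∃ x y : Fin n, (y : ℕ) = x + 1 ∧ (y : ℕ) = t ∧ π y < π x := by
  have ⟨h₁, h₂⟩ := mem_Icc.1 (mem_filter.1 ht).1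
  let x : Fin n := ⟨t - 1, by omega⟩
  let y : Fin n := ⟨t, by omega⟩
  exact ⟨x, y, by simp [x, y]; omega, rfl, (mem_desSet_iff_s14 (by simp [x, y]; omega)).1 ht⟩

lemma le_ldes_s14 {π : Perm (Fin n)} {x y : Fin n} (hxy : (y : ℕ) = x + 1) (h : π y < π x) :
    (y : ℕ) ≤ ldes π :=
  le_sup (f := id) ((mem_desSet_iff_s14 hxy).2 h)

theorem ldes_le_iff_s14 {π : Perm (Fin n)} {c : ℕ} :
    ldes π ≤ c ↔ StrictMonoOn π {x | c ≤ (x : ℕ)} := by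
  rw [ldes, Finset.sup_le_iff]
  constructor
  · intro h
    refine strictMonoOn_of_lt_succ (Set.ordConnected_def.2 fun _ hx _ _ z hz =>
      show c ≤ (z : ℕ) from le_trans hx (Fin.le_def.1 hz.1))
      fun x hx (hcx : c ≤ (x : ℕ)) _ => ?_
    have hsucc : ((Order.succ x : Fin n) : ℕ) = x + 1 :=
      (Nat.covBy_iff_add_one_eq.1 (Fin.covBy_iff.1 (Order.covBy_succ_of_not_isMax hx))).symm
    refine lt_of_le_of_ne (not_lt.1 fun hlt => ?_)
      (π.injective.ne (Order.lt_succ_of_not_isMax hx).ne)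
    have : (x : ℕ) + 1 ≤ c := hsucc ▸ h _ ((mem_desSet_iff_s14 hsucc).2 hlt)
    omega
  · intro h t ht
    obtain ⟨x, y, hxy, rfl, hlt⟩ := exists_of_mem_desSet ht
    by_contra! hc
    change c < (y : ℕ) at hc
    exact hlt.asymm (h (show c ≤ (x : ℕ) by omega) (show c ≤ (y : ℕ) by omega)
      (Fin.lt_def.2 (by omega)))

lemma ldes_le_sub_one (π : Perm (Fin n)) : ldes π ≤ n - 1 :=
  ldes_le_iff_s14.2 fun x (hx : n - 1 ≤ (x : ℕ)) y _ hxy => by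
    have := y.2
    rw [Fin.lt_def] at hxy
    omega

end LastDescent

section InsertMaxStatistics

open Equiv

variable {n : ℕ}

lemma lt_succAbove_iff_val_le {a : Fin (n + 1)} {x : Fin n} :
    a < a.succAbove x ↔ (a : ℕ) ≤ x := by
  rw [Fin.lt_succAbove_iff_le_castSucc, Fin.le_def, Fin.val_castSucc]

theorem avoids321_insertMax_iff (π : Perm (Fin n)) (a : Fin (n + 1)) :
    Avoids321 (insertMax π a) ↔ Avoids321 π ∧ ldes π ≤ a := by
  constructor
  · intro hA
    refine ⟨fun ⟨i, j, k, hij, hjk, hkj, hji⟩ => hA ⟨a.succAbove i, a.succAbove j,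
      a.succAbove k, Fin.strictMono_succAbove a hij, Fin.strictMono_succAbove a hjk, by simpa,
      by simpa⟩, ?_⟩
    refine ldes_le_iff_s14.2 fun x (hx : (a : ℕ) ≤ x) y _ hxy => not_le.1 fun hyx => hA ?_
    have hyx : π y < π x := lt_of_le_of_ne hyx (π.injective.ne hxy.ne')
    exact ⟨a, a.succAbove x, a.succAbove y, lt_succAbove_iff_val_le.2 hx,
      Fin.strictMono_succAbove a hxy, by simpa, by simp [Fin.castSucc_lt_last]⟩
  · rintro ⟨hA, hld⟩ ⟨i, j, k, hij, hjk, hkj, hji⟩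
    have hne : ∀ l, insertMax π a l < insertMax π a i → l ≠ a := fun l h hl => by
      rw [hl, insertMax_self] at h
      exact (Fin.le_last _).not_gt h
    obtain ⟨j, rfl⟩ := Fin.exists_succAbove_eq (hne j hji)
    obtain ⟨k, rfl⟩ := Fin.exists_succAbove_eq (hne k (hkj.trans hji))
    rw [Fin.succAbove_lt_succAbove_iff] at hjk
    rw [insertMax_succAbove, insertMax_succAbove, Fin.castSucc_lt_castSucc_iff] at hkj
    by_cases hia : i = a
    · subst hia
      have hj := lt_succAbove_iff_val_le.1 hij
      exact (ldes_le_iff_s14.1 hld hj (hj.trans (Fin.le_def.1 hjk.le)) hjk).asymm hkj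
    · obtain ⟨i, rfl⟩ := Fin.exists_succAbove_eq hia
      rw [Fin.succAbove_lt_succAbove_iff] at hij
      rw [insertMax_succAbove, insertMax_succAbove, Fin.castSucc_lt_castSucc_iff] at hji
      exact hA ⟨i, j, k, hij, hjk, hkj, hji⟩

lemma insertMax_lt_last_of_ne (π : Perm (Fin n)) {a i : Fin (n + 1)} (h : i ≠ a) :
    insertMax π a i < Fin.last n := by
  obtain ⟨x, rfl⟩ := Fin.exists_succAbove_eq h
  simp [Fin.castSucc_lt_last]

lemma insertMax_last_castSucc (π : Perm (Fin n)) (x : Fin n) :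
    insertMax π (Fin.last n) x.castSucc = (π x).castSucc := by
  simpa using insertMax_succAbove π (Fin.last n) x

theorem ldes_insertMax (π : Perm (Fin n)) {a : Fin (n + 1)} (h : ldes π ≤ a) :
    ldes (insertMax π a) = if (a : ℕ) = n then ldes π else a + 1 := by
  split_ifs with han
  · obtain rfl : a = Fin.last n := Fin.ext han
    refine le_antisymm (ldes_le_iff_s14.2 fun x (hx : ldes π ≤ x) y _ hxy => ?_)
      (ldes_le_iff_s14.2 fun x (hx : ldes (insertMax π _) ≤ x) y hy hxy => ?_)
    · obtain ⟨x, rfl⟩ := Fin.exists_castSucc_eq.2 (Fin.ne_last_of_lt hxy)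
      rcases Fin.eq_castSucc_or_eq_last y with ⟨y, rfl⟩ | rfl
      · rw [insertMax_last_castSucc, insertMax_last_castSucc, Fin.castSucc_lt_castSucc_iff]
        exact ldes_le_iff_s14.1 le_rfl hx (hx.trans (Fin.le_def.1 hxy.le))
          (Fin.castSucc_lt_castSucc_iff.1 hxy)
      · rw [insertMax_self]
        exact insertMax_lt_last_of_ne π (Fin.castSucc_lt_last x).ne
    · have := ldes_le_iff_s14.1 le_rfl (show ldes (insertMax π _) ≤ (x.castSucc : ℕ) from hx)
        (show ldes (insertMax π _) ≤ (y.castSucc : ℕ) from hy)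
        (Fin.castSucc_lt_castSucc_iff.2 hxy)
      rwa [insertMax_last_castSucc, insertMax_last_castSucc, Fin.castSucc_lt_castSucc_iff] at this
  · refine le_antisymm (ldes_le_iff_s14.2 fun x (hx : (a : ℕ) + 1 ≤ x) y _ hxy => ?_) ?_
    · obtain ⟨x, rfl⟩ := Fin.exists_succAbove_eq (Fin.ne_of_gt (Fin.lt_def.2 hx))
      obtain ⟨y, rfl⟩ := Fin.exists_succAbove_eq (Fin.ne_of_gt ((Fin.lt_def.2 hx).trans hxy))
      have hax := lt_succAbove_iff_val_le.1 (Fin.lt_def.2 hx)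
      rw [Fin.succAbove_lt_succAbove_iff] at hxy
      rw [insertMax_succAbove, insertMax_succAbove, Fin.castSucc_lt_castSucc_iff]
      exact ldes_le_iff_s14.1 h hax (hax.trans (Fin.le_def.1 hxy.le)) hxy
    · have hlt : (a : ℕ) + 1 < n + 1 := by omega
      refine le_ldes_s14 (x := a) (y := ⟨a + 1, hlt⟩) rfl ?_
      rw [insertMax_self]
      exact insertMax_lt_last_of_ne π (Fin.ne_of_gt (Fin.lt_def.2 (Nat.lt_succ_self _)))

end InsertMaxStatistics

section PermRecursion

open Equiv

variable {n : ℕ} {M : Type*} [AddCommMonoid M]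

lemma mem_Tset {π : Perm (Fin n)} : π ∈ Tset n ↔ Avoids321 π := by
  simp [Tset]

def insertMaxAt (π : Perm (Fin n)) (a : ℕ) : Perm (Fin (n + 1)) :=
  insertMax π ⟨min a n, Nat.lt_succ_of_le (min_le_right a n)⟩

lemma insertMaxAt_of_le (π : Perm (Fin n)) {a : ℕ} (h : a ≤ n) :
    insertMaxAt π a = insertMax π ⟨a, Nat.lt_succ_of_le h⟩ :=
  congrArg (insertMax π) (Fin.ext (min_eq_left h))

theorem sum_Tset_succ (g : Perm (Fin (n + 1)) → M) :
    ∑ π ∈ Tset (n + 1), g π =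
      ∑ π ∈ Tset n, ∑ a ∈ Icc (ldes π) n, g (insertMaxAt π a) := by
  refine sum_eq_sum_sum_Icc_of_insertion ldes insertMaxAt eraseMax
    (fun π => (π.symm (Fin.last n) : ℕ)) (fun π hπ a ha => ?_) (fun π hπ => ?_)
    (fun π _ a ha => ?_) (fun π _ => ?_) g
  · rw [mem_Icc] at ha
    rw [mem_Tset, insertMaxAt_of_le π ha.2, avoids321_insertMax_iff]
    exact ⟨mem_Tset.1 hπ, ha.1⟩
  · rw [mem_Tset, ← insertMax_eraseMax π, avoids321_insertMax_iff] at hπ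
    exact ⟨mem_Tset.2 hπ.1, mem_Icc.2 ⟨hπ.2, Nat.lt_succ_iff.1 (π.symm (Fin.last n)).2⟩⟩
  · rw [mem_Icc] at ha
    rw [insertMaxAt_of_le π ha.2, eraseMax_insertMax, insertMax_symm_last]
    exact ⟨rfl, rfl⟩
  · rw [insertMaxAt_of_le _ (Nat.lt_succ_iff.1 (π.symm (Fin.last n)).2)]
    exact insertMax_eraseMax π

theorem sum_Tset_succ_ldes (f : ℕ → M) :
    ∑ π ∈ Tset (n + 1), f (ldes π) = ∑ π ∈ Tset n, ∑ a ∈ Icc (ldes π) n, f a := by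
  rw [sum_Tset_succ]
  refine sum_congr rfl fun π _ => ?_
  rw [← sum_Icc_rotate f ((ldes_le_sub_one π).trans (Nat.sub_le n 1))]
  refine sum_congr rfl fun a ha => ?_
  rw [mem_Icc] at ha
  rw [insertMaxAt_of_le π ha.2, ldes_insertMax π ha.1]

end PermRecursion

theorem sum_Tset_ldes_eq_sum_pathLdes {M : Type*} [AddCommMonoid M] (n : ℕ) (f : ℕ → M) :
    ∑ π ∈ Tset n, f (ldes π) = ∑ p : DyckPath n, f (pathLdes p) := by
  induction n generalizing f with
  | zero =>
    have hT : ∀ π : Equiv.Perm (Fin 0), ldes π = 0 := fun π =>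
      Nat.le_zero.1 (ldes_le_sub_one π)
    have hP : ∀ p : DyckPath 0, pathLdes p = 0 := fun p => Nat.le_zero.1 p.pathLdes_le
    simp only [hT, hP, sum_const]
    -- both index sets are singletons
    rfl
  | succ n ih =>
    rw [sum_Tset_succ_ldes, DyckPath.sum_succ_pathLdes]
    exact ih fun s => ∑ a ∈ Icc s n, f a

theorem DyckPath.sum_pathLind_eq_sum_pathLdes {M : Type*} [AddCommMonoid M] (n : ℕ)
    (f : ℕ → M) :
    ∑ p : DyckPath n, f (pathLind p - 1) = ∑ p : DyckPath n, f (pathLdes p) := by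
  cases n with
  | zero =>
    refine sum_congr rfl fun p _ => congrArg f ?_
    have hP : pathLdes p = 0 := Nat.le_zero.1 p.pathLdes_le
    -- at `n = 0` both statistics are sups over the same interval `Icc 1 0`
    change pathLdes p - 1 = pathLdes p
    rw [hP]
  | succ n => rw [sum_succ_pathLind, sum_succ_pathLdes]

theorem ldes_perm_path_equidistribution (n : ℕ) (q : ℤ) :
    (∑ π ∈ Tset n, q ^ ldes π) = (∑ p : DyckPath n, q ^ pathLdes p) ∧
      (∑ π ∈ Tset n, q ^ ldes π) = ∑ p : DyckPath n, q ^ (pathLind p - 1) :=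
  ⟨sum_Tset_ldes_eq_sum_pathLdes n _,
    (sum_Tset_ldes_eq_sum_pathLdes n _).trans (DyckPath.sum_pathLind_eq_sum_pathLdes n _).symm⟩
end
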